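/- arXiv:1802.09945 — 2 statements merged into one kernel-verified Lean document; each statement's English description precedes it below -/
import Mathlib

section
/- For every integer m ≥ 6, there exists a numerical monoid H with exactly m atoms such that the singleton {3} is not an element of 𝓛(H). -/
/-- A numerical monoid: an additive submonoid of `ℕ` whose complement in `ℕ` is finite. -/
def IsNumericalMonoid (H : AddSubmonoid ℕ) : Prop :=
  ((H : Set ℕ)ᶜ).Finite

/-- `u` is an atom of `H`: it is a nonzero element of `H` which cannot be written as the
sum of two nonzero elements of `H`. -/
def IsAtomOf (H : AddSubmonoid ℕ) (u : ℕ) : Prop :=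
  u ∈ H ∧ u ≠ 0 ∧ ∀ x y : ℕ, x ∈ H → y ∈ H → x ≠ 0 → y ≠ 0 → u ≠ x + y

/-- The set of atoms of `H`. -/
def atomSet (H : AddSubmonoid ℕ) : Set ℕ := {u | IsAtomOf H u}

/-- The set of lengths of `a`: all `k` such that `a` is a sum of `k` atoms of `H`.
(For `a = 0` this gives `{0}`, via the empty sum, matching the convention `L(0) = {0}`.) -/
def lengthSet (H : AddSubmonoid ℕ) (a : ℕ) : Set ℕ :=
  {k | ∃ s : Multiset ℕ, Multiset.card s = k ∧ (∀ u ∈ s, IsAtomOf H u) ∧ s.sum = a}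

/-- The system of sets of lengths of `H`. -/
def systemOfLengths (H : AddSubmonoid ℕ) : Set (Set ℕ) :=
  {L | ∃ a ∈ H, L = lengthSet H a}

/-- The numerical monoid `{0, m} ∪ [⌊3m/2⌋, ∞)`. -/
def Hmon (m : ℕ) : AddSubmonoid ℕ where
  carrier := {x | x = 0 ∨ x = m ∨ 3*m/2 ≤ x}
  zero_mem' := Or.inl rfl
  add_mem' := by
    intro a b ha hb
    simp only [Set.mem_setOf_eq] at *
    omega

lemma mem_Hmon (m x : ℕ) : x ∈ Hmon m ↔ (x = 0 ∨ x = m ∨ 3*m/2 ≤ x) := Iff.rfl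

lemma atom_iff (m : ℕ) (hm : 6 ≤ m) (u : ℕ) :
    IsAtomOf (Hmon m) u ↔
      (u = m ∨ (3*m/2 ≤ u ∧ u ≤ 3*m/2 + m - 1 ∧ u ≠ 2*m)) := by
  constructor
  · rintro ⟨hu, hne, hsum⟩
    rw [mem_Hmon] at hu
    by_contra hcon
    push_neg at hcon
    obtain ⟨hum, hrest⟩ := hcon
    have hN : 3*m/2 ≤ u := by omega
    by_cases h2m : u = 2*m
    · exact hsum m m (by rw [mem_Hmon]; omega) (by rw [mem_Hmon]; omega)
        (by omega) (by omega) (by omega)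
    · have hbig : 3*m/2 + m ≤ u := by
        by_contra hsmall
        exact h2m (hrest hN (by omega))
      exact hsum m (u - m) (by rw [mem_Hmon]; omega) (by rw [mem_Hmon]; omega)
        (by omega) (by omega) (by omega)
  · intro h
    rcases h with rfl | ⟨h1, h2, h3⟩
    · refine ⟨by rw [mem_Hmon]; omega, by omega, ?_⟩
      intro x y hx hy hx0 hy0
      rw [mem_Hmon] at hx hy
      omega
    · refine ⟨by rw [mem_Hmon]; omega, by omega, ?_⟩
      intro x y hx hy hx0 hy0
      rw [mem_Hmon] at hx hy
      omega

lemma atomSet_eq (m : ℕ) (hm : 6 ≤ m) :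
    atomSet (Hmon m) =
      ↑(insert m ((Finset.Icc (3*m/2) (3*m/2 + m - 1)).erase (2*m))) := by
  ext u
  simp only [atomSet, Set.mem_setOf_eq, atom_iff m hm, Finset.coe_insert, Set.mem_insert_iff,
    Finset.coe_erase, Set.mem_diff, Finset.mem_coe, Finset.mem_Icc, Set.mem_singleton_iff]
  omega

lemma atom_ncard (m : ℕ) (hm : 6 ≤ m) : (atomSet (Hmon m)).ncard = m := by
  rw [atomSet_eq m hm, Set.ncard_coe_finset]
  have h1 : m ∉ (Finset.Icc (3*m/2) (3*m/2 + m - 1)).erase (2*m) := by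
    simp only [Finset.mem_erase, Finset.mem_Icc]
    omega
  have h2 : 2*m ∈ Finset.Icc (3*m/2) (3*m/2 + m - 1) := by
    simp only [Finset.mem_Icc]
    omega
  rw [Finset.card_insert_of_notMem h1, Finset.card_erase_of_mem h2, Nat.card_Icc]
  omega

/-- Any `t ∈ [2N, 2N+2m-2]` (where `N = ⌊3m/2⌋`) is the sum of two "interval" atoms. -/
lemma two_sum (m t : ℕ) (hm : 6 ≤ m) (h1 : 2*(3*m/2) ≤ t) (h2 : t ≤ 2*(3*m/2) + 2*m - 2) :
    ∃ x y : ℕ, (3*m/2 ≤ x ∧ x ≤ 3*m/2 + m - 1 ∧ x ≠ 2*m) ∧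
      (3*m/2 ≤ y ∧ y ≤ 3*m/2 + m - 1 ∧ y ≠ 2*m) ∧ x + y = t := by
  by_cases e1 : t = 4*m - 1
  · exact ⟨2*m - 2, 2*m + 1, by omega, by omega, by omega⟩
  by_cases e2 : t = 4*m
  · exact ⟨2*m - 1, 2*m + 1, by omega, by omega, by omega⟩
  by_cases e3 : t = 4*m + 1
  · exact ⟨2*m - 1, 2*m + 2, by omega, by omega, by omega⟩
  exact ⟨3*m/2 + (t - 2*(3*m/2) + 1)/2, t - (3*m/2 + (t - 2*(3*m/2) + 1)/2),
    by omega, by omega, by omega⟩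

/-- Any `t ∈ [3N, 3N+3m-3]` is the sum of three "interval" atoms. -/
lemma three_sum (m t : ℕ) (hm : 6 ≤ m) (h1 : 3*(3*m/2) ≤ t) (h2 : t ≤ 3*(3*m/2) + 3*m - 3) :
    ∃ x y z : ℕ, (3*m/2 ≤ x ∧ x ≤ 3*m/2 + m - 1 ∧ x ≠ 2*m) ∧
      (3*m/2 ≤ y ∧ y ≤ 3*m/2 + m - 1 ∧ y ≠ 2*m) ∧
      (3*m/2 ≤ z ∧ z ≤ 3*m/2 + m - 1 ∧ z ≠ 2*m) ∧ x + y + z = t := by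
  by_cases hc : t - 2*(3*m/2) ≤ 3*m/2 + m - 1
  · by_cases hd : t = 2*(3*m/2) + 2*m
    · obtain ⟨x, y, hx, hy, hxy⟩ := two_sum m (t - (2*m - 1)) hm (by omega) (by omega)
      exact ⟨x, y, 2*m - 1, hx, hy, by omega, by omega⟩
    · obtain ⟨x, y, hx, hy, hxy⟩ := two_sum m (2*(3*m/2)) hm (by omega) (by omega)
      exact ⟨x, y, t - 2*(3*m/2), hx, hy, by omega, by omega⟩
  · obtain ⟨x, y, hx, hy, hxy⟩ := two_sum m (t - (3*m/2 + m - 1)) hm (by omega) (by omega)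
    exact ⟨x, y, 3*m/2 + m - 1, hx, hy, by omega, by omega⟩

theorem stmt_4 (m : ℕ) (hm : 6 ≤ m) :
    ∃ H : AddSubmonoid ℕ, IsNumericalMonoid H ∧ (atomSet H).ncard = m ∧
      ({3} : Set ℕ) ∉ systemOfLengths H := by
  refine ⟨Hmon m, ?_, atom_ncard m hm, ?_⟩
  · apply Set.Finite.subset (Set.finite_Icc 0 (3*m/2))
    intro x hx
    simp only [Set.mem_compl_iff, SetLike.mem_coe, mem_Hmon] at hx
    simp only [Set.mem_Icc]
    omega
  · rintro ⟨a, ha, hL⟩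
    have h3 : 3 ∈ lengthSet (Hmon m) a := by
      rw [← hL]; rfl
    obtain ⟨s, hcard, hat, hsum⟩ := h3
    obtain ⟨u, v, w, rfl⟩ := Multiset.card_eq_three.1 hcard
    have hu := (atom_iff m hm u).1 (hat u (by simp))
    have hv := (atom_iff m hm v).1 (hat v (by simp))
    have hw := (atom_iff m hm w).1 (hat w (by simp))
    have hsum' : u + v + w = a := by
      simp only [Multiset.insert_eq_cons, Multiset.sum_cons, Multiset.sum_singleton] at hsum
      omega
    -- bounds on a
    have hlo : 3*m ≤ a := by omega
    have hhi : a ≤ 3*(3*m/2) + 3*m - 3 := by omega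
    -- any explicit factorization must have length 3
    have hcontr : ∀ l : Multiset ℕ, (∀ x ∈ l, IsAtomOf (Hmon m) x) → l.sum = a →
        Multiset.card l = 3 := by
      intro l h1 h2
      have hmem : Multiset.card l ∈ lengthSet (Hmon m) a := ⟨l, rfl, h1, h2⟩
      rw [← hL] at hmem
      exact hmem
    have atomm : IsAtomOf (Hmon m) m := (atom_iff m hm m).2 (Or.inl rfl)
    have atomJ : ∀ x, 3*m/2 ≤ x → x ≤ 3*m/2 + m - 1 → x ≠ 2*m → IsAtomOf (Hmon m) x :=
      fun x h1 h2 h3 => (atom_iff m hm x).2 (Or.inr ⟨h1, h2, h3⟩)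
    by_cases hA : a ≤ 2*(3*m/2) + 2*m - 2
    · -- a is a sum of two atoms : length 2, contradiction
      obtain ⟨x, y, hx, hy, hxy⟩ := two_sum m a hm (by omega) hA
      have := hcontr {x, y} (by
        intro q hq
        simp only [Multiset.insert_eq_cons, Multiset.mem_cons, Multiset.mem_singleton] at hq
        rcases hq with rfl | rfl
        · exact atomJ q hx.1 hx.2.1 hx.2.2
        · exact atomJ q hy.1 hy.2.1 hy.2.2)
        (by simp only [Multiset.insert_eq_cons, Multiset.sum_cons, Multiset.sum_singleton]; omega)
      simp at this
    · by_cases hB1 : a ≤ 3*m/2 + 4*m - 1 ∧ a ≠ 5*m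
      · -- a = m + m + m + (a - 3m) : length 4
        have := hcontr {m, m, m, a - 3*m} (by
          intro q hq
          simp only [Multiset.insert_eq_cons, Multiset.mem_cons, Multiset.mem_singleton] at hq
          rcases hq with rfl | rfl | rfl | rfl
          · exact atomm
          · exact atomm
          · exact atomm
          · exact atomJ _ (by omega) (by omega) (by omega))
          (by simp only [Multiset.insert_eq_cons, Multiset.sum_cons, Multiset.sum_singleton]; omega)
        simp at this
      · push_neg at hB1
        by_cases hB2 : a ≤ 2*(3*m/2) + 4*m - 2
        · -- a = m + m + x + y : length 4
          obtain ⟨x, y, hx, hy, hxy⟩ := two_sum m (a - 2*m) hm (by omega) (by omega)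
          have := hcontr {m, m, x, y} (by
            intro q hq
            simp only [Multiset.insert_eq_cons, Multiset.mem_cons, Multiset.mem_singleton] at hq
            rcases hq with rfl | rfl | rfl | rfl
            · exact atomm
            · exact atomm
            · exact atomJ q hx.1 hx.2.1 hx.2.2
            · exact atomJ q hy.1 hy.2.1 hy.2.2)
            (by simp only [Multiset.insert_eq_cons, Multiset.sum_cons, Multiset.sum_singleton]; omega)
          simp at this
        · -- a = m + x + y + z : length 4
          obtain ⟨x, y, z, hx, hy, hz, hxyz⟩ := three_sum m (a - m) hm (by omega) (by omega)
          have := hcontr {m, x, y, z} (by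
            intro q hq
            simp only [Multiset.insert_eq_cons, Multiset.mem_cons, Multiset.mem_singleton] at hq
            rcases hq with rfl | rfl | rfl | rfl
            · exact atomm
            · exact atomJ q hx.1 hx.2.1 hx.2.2
            · exact atomJ q hy.1 hy.2.1 hy.2.2
            · exact atomJ q hz.1 hz.2.1 hz.2.2)
            (by simp only [Multiset.insert_eq_cons, Multiset.sum_cons, Multiset.sum_singleton]; omega)
          simp at this
end

section
/- If H is a numerical monoid with exactly 3 atoms, then the singleton {3} is an element of 𝓛(H); that is, there exists a ∈ H whose set of lengths L(a) equals {3}. -/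
lemma card_mul_le_sum (p : ℕ) (s : Multiset ℕ) (hs : ∀ u ∈ s, p ≤ u) :
    Multiset.card s * p ≤ s.sum := by
  induction s using Multiset.induction with
  | empty => simp
  | cons x t ih =>
    have hx := hs x (Multiset.mem_cons_self x t)
    have ht := ih fun u hu => hs u (Multiset.mem_cons_of_mem hu)
    simp only [Multiset.card_cons, Multiset.sum_cons, add_mul, one_mul]
    omega

lemma sort3 (a b c : ℕ) (hab : a ≠ b) (hac : a ≠ c) (hbc : b ≠ c) :
    ∃ p q r, p < q ∧ q < r ∧ ({a, b, c} : Set ℕ) = {p, q, r} := by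
  rcases Nat.lt_trichotomy a b with h1 | rfl | h1
  · rcases Nat.lt_trichotomy b c with h2 | rfl | h2
    · exact ⟨a, b, c, h1, h2, rfl⟩
    · exact absurd rfl hbc
    · rcases Nat.lt_trichotomy a c with h3 | rfl | h3
      · exact ⟨a, c, b, h3, h2, by ext x; simp; tauto⟩
      · exact absurd rfl hac
      · exact ⟨c, a, b, h3, h1, by ext x; simp; tauto⟩
  · exact absurd rfl hab
  · rcases Nat.lt_trichotomy a c with h2 | rfl | h2
    · exact ⟨b, a, c, h1, h2, by ext x; simp; tauto⟩
    · exact absurd rfl hac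
    · rcases Nat.lt_trichotomy b c with h3 | rfl | h3
      · exact ⟨b, c, a, h3, h2, by ext x; simp; tauto⟩
      · exact absurd rfl hbc
      · exact ⟨c, b, a, h3, h1, by ext x; simp; tauto⟩

lemma key (H : AddSubmonoid ℕ) (x y z a : ℕ)
    (hx : IsAtomOf H x) (hy : IsAtomOf H y) (hz : IsAtomOf H z)
    (hxyz : x + y + z = a)
    (h1 : ∀ u, IsAtomOf H u → u ≠ a)
    (h2 : ∀ u v, IsAtomOf H u → IsAtomOf H v → u + v ≠ a)
    (h4 : ∀ s : Multiset ℕ, (∀ u ∈ s, IsAtomOf H u) → 4 ≤ Multiset.card s → s.sum ≠ a) :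
    a ∈ H ∧ lengthSet H a = {3} := by
  have haH : a ∈ H := by
    subst hxyz; exact H.add_mem (H.add_mem hx.1 hy.1) hz.1
  refine ⟨haH, ?_⟩
  ext k
  simp only [lengthSet, Set.mem_setOf_eq, Set.mem_singleton_iff]
  constructor
  · rintro ⟨s, hcard, hatom, hsum⟩
    by_contra hk
    have hk' : Multiset.card s = 0 ∨ Multiset.card s = 1 ∨ Multiset.card s = 2 ∨
        4 ≤ Multiset.card s := by omega
    rcases hk' with h | h | h | h
    · rw [Multiset.card_eq_zero] at h
      subst h
      simp at hsum
      exact hx.2.1 (by omega)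
    · rw [Multiset.card_eq_one] at h
      obtain ⟨u, rfl⟩ := h
      have hu := hatom u (by simp)
      simp at hsum
      exact h1 u hu hsum
    · rw [Multiset.card_eq_two] at h
      obtain ⟨u, v, rfl⟩ := h
      have hu := hatom u (by simp)
      have hv := hatom v (by simp)
      have huv : u + v = a := by simpa using hsum
      exact h2 u v hu hv huv
    · exact h4 s hatom h hsum
  · rintro rfl
    refine ⟨{x, y, z}, by simp, ?_, ?_⟩
    · intro u hu
      simp only [Multiset.insert_eq_cons, Multiset.mem_cons, Multiset.mem_singleton] at hu
      rcases hu with rfl | rfl | rfl <;> assumption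
    · simp only [Multiset.insert_eq_cons, Multiset.sum_cons, Multiset.sum_singleton]
      omega

theorem stmt_5 (H : AddSubmonoid ℕ) (hH : IsNumericalMonoid H)
    (hcard : (atomSet H).ncard = 3) :
    ({3} : Set ℕ) ∈ systemOfLengths H ∧ ∃ a ∈ H, lengthSet H a = {3} := by
  obtain ⟨x, y, z, hxy, hxz, hyz, hset⟩ := Set.ncard_eq_three.mp hcard
  obtain ⟨p, q, r, hpq, hqr, hset'⟩ := sort3 x y z hxy hxz hyz
  rw [hset'] at hset
  have hp : IsAtomOf H p := by
    have : p ∈ atomSet H := by rw [hset]; simp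
    exact this
  have hq : IsAtomOf H q := by
    have : q ∈ atomSet H := by rw [hset]; simp
    exact this
  have hr : IsAtomOf H r := by
    have : r ∈ atomSet H := by rw [hset]; simp
    exact this
  have hmem : ∀ u, IsAtomOf H u → u = p ∨ u = q ∨ u = r := by
    intro u hu
    have : u ∈ atomSet H := hu
    rw [hset] at this
    simpa using this
  have hp0 : p ≠ 0 := hp.2.1
  have hq0 : q ≠ 0 := hq.2.1
  have hpH := hp.1
  have hqH := hq.1
  have hppH : p + p ∈ H := H.add_mem hpH hpH
  have hpqH : p + q ∈ H := H.add_mem hpH hqH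
  have hqqH : q + q ∈ H := H.add_mem hqH hqH
  have n1 : q ≠ p + p := hq.2.2 p p hpH hpH hp0 hp0
  have n2 : r ≠ p + p := hr.2.2 p p hpH hpH hp0 hp0
  have n3 : r ≠ p + q := hr.2.2 p q hpH hqH hp0 hq0
  have n4 : r ≠ q + q := hr.2.2 q q hqH hqH hq0 hq0
  have n5 : q ≠ p + (p + p) := hq.2.2 p (p + p) hpH hppH hp0 (by omega)
  have n6 : r ≠ p + (p + p) := hr.2.2 p (p + p) hpH hppH hp0 (by omega)
  have n7 : r ≠ p + (p + q) := hr.2.2 p (p + q) hpH hpqH hp0 (by omega)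
  have n8 : r ≠ p + (q + q) := hr.2.2 p (q + q) hpH hqqH hp0 (by omega)
  have hple : ∀ u, IsAtomOf H u → p ≤ u := by
    intro u hu
    rcases hmem u hu with rfl | rfl | rfl <;> omega
  have hbound : ∀ s : Multiset ℕ, (∀ u ∈ s, IsAtomOf H u) →
      Multiset.card s * p ≤ s.sum :=
    fun s hs => card_mul_le_sum p s fun u hu => hple u (hs u hu)
  by_cases hA : q + q = p + p + p
  · by_cases hD : r + r = p + p + q
    · -- a = p + q + r
      obtain ⟨haH, hlen⟩ := key H p q r (p + q + r) hp hq hr rfl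
        (fun u hu => by rcases hmem u hu with rfl | rfl | rfl <;> omega)
        (fun u v hu hv => by
          rcases hmem u hu with rfl | rfl | rfl <;>
            rcases hmem v hv with rfl | rfl | rfl <;> omega)
        (fun s hs hc => by
          intro hsum
          by_cases hall : ∀ u ∈ s, u = p
          · have hrep : s = Multiset.replicate (Multiset.card s) p :=
              Multiset.eq_replicate.mpr ⟨rfl, hall⟩
            have hsums : s.sum = Multiset.card s * p := by
              have := congrArg Multiset.sum hrep
              simpa [Multiset.sum_replicate, smul_eq_mul] using this
            rcases Nat.lt_or_ge (Multiset.card s) 5 with h5 | h5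
            · have hc4 : Multiset.card s = 4 := by omega
              rw [hc4] at hsums
              omega
            · have : 5 * p ≤ Multiset.card s * p := Nat.mul_le_mul_right p h5
              omega
          · push_neg at hall
            obtain ⟨w, hws, hwp⟩ := hall
            have hqw : q ≤ w := by
              rcases hmem w (hs w hws) with rfl | rfl | rfl <;> omega
            obtain ⟨t, rfl⟩ := Multiset.exists_cons_of_mem hws
            have ht := hbound t fun u hu => hs u (Multiset.mem_cons_of_mem hu)
            have hct : 3 ≤ Multiset.card t := by
              simp only [Multiset.card_cons] at hc; omega
            have h3p : 3 * p ≤ Multiset.card t * p := Nat.mul_le_mul_right p hct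
            simp only [Multiset.sum_cons] at hsum
            omega)
      exact ⟨⟨_, haH, hlen.symm⟩, _, haH, hlen⟩
    · -- a = p + p + q
      obtain ⟨haH, hlen⟩ := key H p p q (p + p + q) hp hp hq rfl
        (fun u hu => by rcases hmem u hu with rfl | rfl | rfl <;> omega)
        (fun u v hu hv => by
          rcases hmem u hu with rfl | rfl | rfl <;>
            rcases hmem v hv with rfl | rfl | rfl <;> omega)
        (fun s hs hc => by
          have hb := hbound s hs
          have : 4 * p ≤ Multiset.card s * p := Nat.mul_le_mul_right p hc
          omega)
      exact ⟨⟨_, haH, hlen.symm⟩, _, haH, hlen⟩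
  · by_cases hB : q + r = p + p + p
    · by_cases hD : r + r = p + p + q
      · -- a = p + q + q
        obtain ⟨haH, hlen⟩ := key H p q q (p + q + q) hp hq hq rfl
          (fun u hu => by rcases hmem u hu with rfl | rfl | rfl <;> omega)
          (fun u v hu hv => by
            rcases hmem u hu with rfl | rfl | rfl <;>
              rcases hmem v hv with rfl | rfl | rfl <;> omega)
          (fun s hs hc => by
            have hb := hbound s hs
            have : 4 * p ≤ Multiset.card s * p := Nat.mul_le_mul_right p hc
            omega)
        exact ⟨⟨_, haH, hlen.symm⟩, _, haH, hlen⟩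
      · -- a = p + p + q
        obtain ⟨haH, hlen⟩ := key H p p q (p + p + q) hp hp hq rfl
          (fun u hu => by rcases hmem u hu with rfl | rfl | rfl <;> omega)
          (fun u v hu hv => by
            rcases hmem u hu with rfl | rfl | rfl <;>
              rcases hmem v hv with rfl | rfl | rfl <;> omega)
          (fun s hs hc => by
            have hb := hbound s hs
            have : 4 * p ≤ Multiset.card s * p := Nat.mul_le_mul_right p hc
            omega)
        exact ⟨⟨_, haH, hlen.symm⟩, _, haH, hlen⟩
    · by_cases hC : r + r = p + p + p
      · -- a = p + p + q ;  here r + r = p + p + q is impossible since q > p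
        have hD : r + r ≠ p + p + q := by omega
        obtain ⟨haH, hlen⟩ := key H p p q (p + p + q) hp hp hq rfl
          (fun u hu => by rcases hmem u hu with rfl | rfl | rfl <;> omega)
          (fun u v hu hv => by
            rcases hmem u hu with rfl | rfl | rfl <;>
              rcases hmem v hv with rfl | rfl | rfl <;> omega)
          (fun s hs hc => by
            have hb := hbound s hs
            have : 4 * p ≤ Multiset.card s * p := Nat.mul_le_mul_right p hc
            omega)
        exact ⟨⟨_, haH, hlen.symm⟩, _, haH, hlen⟩
      · -- a = p + p + p
        obtain ⟨haH, hlen⟩ := key H p p p (p + p + p) hp hp hp rfl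
          (fun u hu => by rcases hmem u hu with rfl | rfl | rfl <;> omega)
          (fun u v hu hv => by
            rcases hmem u hu with rfl | rfl | rfl <;>
              rcases hmem v hv with rfl | rfl | rfl <;> omega)
          (fun s hs hc => by
            have hb := hbound s hs
            have : 4 * p ≤ Multiset.card s * p := Nat.mul_le_mul_right p hc
            omega)
        exact ⟨⟨_, haH, hlen.symm⟩, _, haH, hlen⟩
end
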